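/- arXiv:2005.00218 — 6 statements merged into one kernel-verified Lean document; each statement's English description precedes it below -/
import Mathlib

section
/- Let L be a real symmetric positive semidefinite d×d matrix admitting an orthonormal eigenbasis e_1,…,e_d of ℝ^d with nonnegative eigenvalues λ_1,…,λ_d (L e_i = λ_i e_i). Fix σ ≥ 0, let A = I + σL, fix a vector v ∈ ℝ^d and ν ≥ 0, and let n be a random vector in ℝ^d whose coordinates are i.i.d. centered Gaussian with variance ν² (i.e., distributed according to the d-fold product of the Gaussian measure N(0, ν²)). Then the Laplacian smoothing estimate v̂ = A⁻¹(v + n) satisfies E‖v̂ − v‖² = Σ_{i=1}^d (σ²λ_i²/(1+σλ_i)²)·⟨v, e_i⟩² + Σ_{i=1}^d ν²/(1+σλ_i)². -/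
open MeasureTheory ProbabilityTheory
open scoped NNReal

/-!
Let `E` be the orthogonal matrix with rows `eᵢ` and `cᵢ = (1 + σλᵢ)⁻¹`. The eigen-relations give the
spectral decomposition `L = Eᵀ diag(λ) E`, hence `(I + σL)⁻¹ = Eᵀ diag(c) E`. As `Eᵀ` is an isometry,
`‖v̂ - v‖² = Σᵢ (aᵢ + ⟨cᵢeᵢ, n⟩)²` with `aᵢ = (cᵢ - 1)⟨eᵢ, v⟩`. For noise with independent centred
coordinates of variance `ν²`, the linear form `⟨u, n⟩` is centred with variance `ν²‖u‖²`, so the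
`i`-th summand has expectation `aᵢ² + ν²cᵢ²`. Only these two moments of the Gaussian enter.
-/

section Noise

variable {ι : Type*} [Fintype ι] {μ : ι → Measure ℝ} [∀ i, IsProbabilityMeasure (μ i)]

lemma memLp_dotProduct_pi (hμ : ∀ i, MemLp id 2 (μ i)) (u : ι → ℝ) :
    MemLp (fun n => u ⬝ᵥ n) 2 (Measure.pi μ) :=
  memLp_finsetSum _ fun i _ =>
    ((hμ i).comp_measurePreserving (measurePreserving_eval μ i)).const_mul (u i)

lemma memLp_const_add_dotProduct_pi (hμ : ∀ i, MemLp id 2 (μ i)) (a : ℝ) (u : ι → ℝ) :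
    MemLp (fun n => a + u ⬝ᵥ n) 2 (Measure.pi μ) :=
  (memLp_const a).add (memLp_dotProduct_pi hμ u)

lemma integral_dotProduct_pi (hμ : ∀ i, Integrable id (μ i)) (u : ι → ℝ) :
    ∫ n, u ⬝ᵥ n ∂Measure.pi μ = ∑ i, u i * ∫ x, x ∂μ i := by
  simp only [dotProduct]
  rw [integral_finsetSum _ fun i _ => (integrable_eval (hμ i)).const_mul (u i)]
  simp_rw [integral_const_mul, integral_eval]

lemma variance_dotProduct_pi (hμ : ∀ i, MemLp id 2 (μ i)) (u : ι → ℝ) :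
    Var[fun n => u ⬝ᵥ n; Measure.pi μ] = ∑ i, u i ^ 2 * Var[id; μ i] := by
  have h := variance_sum_pi (μ := μ) (X := fun i x => u i * x) fun i => (hμ i).const_mul (u i)
  rw [Finset.sum_fn] at h
  convert h using 2 with i
  · ext n
    simp [dotProduct]
  · exact (variance_const_mul (u i) id (μ i)).symm

lemma integral_const_add_dotProduct_sq_pi {s : ℝ} (hμ : ∀ i, MemLp id 2 (μ i))
    (hmean : ∀ i, ∫ x, x ∂μ i = 0) (hvar : ∀ i, Var[id; μ i] = s) (a : ℝ) (u : ι → ℝ) :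
    ∫ n, (a + u ⬝ᵥ n) ^ 2 ∂Measure.pi μ = a ^ 2 + s * (u ⬝ᵥ u) := by
  have hU := memLp_dotProduct_pi hμ u
  have h_integral : ∫ n, (a + u ⬝ᵥ n) ∂Measure.pi μ = a := by
    rw [integral_add (integrable_const a) (hU.integrable one_le_two),
      integral_dotProduct_pi (fun i => (hμ i).integrable one_le_two)]
    simp [hmean]
  have h_variance : Var[fun n => a + u ⬝ᵥ n; Measure.pi μ] = s * (u ⬝ᵥ u) := by
    rw [variance_const_add hU.aestronglyMeasurable, variance_dotProduct_pi hμ, dotProduct,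
      Finset.mul_sum]
    simp only [hvar, sq, mul_comm]
  have h := variance_eq_sub (memLp_const_add_dotProduct_pi hμ a u)
  rw [h_variance, h_integral] at h
  simp only [Pi.pow_apply] at h
  linarith

lemma integral_sum_const_add_dotProduct_sq_pi {κ : Type*} [Fintype κ] {s : ℝ}
    (hμ : ∀ i, MemLp id 2 (μ i)) (hmean : ∀ i, ∫ x, x ∂μ i = 0) (hvar : ∀ i, Var[id; μ i] = s)
    (a : κ → ℝ) (u : κ → ι → ℝ) :
    ∫ n, ∑ j, (a j + u j ⬝ᵥ n) ^ 2 ∂Measure.pi μ = ∑ j, (a j ^ 2 + s * (u j ⬝ᵥ u j)) := by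
  rw [integral_finsetSum _ fun j _ => (memLp_const_add_dotProduct_pi hμ (a j) (u j)).integrable_sq]
  simp_rw [integral_const_add_dotProduct_sq_pi hμ hmean hvar]

end Noise

namespace Matrix

variable {ι : Type*} [Fintype ι] [DecidableEq ι] {E : Matrix ι ι ℝ}

lemma eq_transpose_mul_diagonal_mul_of_mulVec_eq_smul {L : Matrix ι ι ℝ} {lam : ι → ℝ}
    (hE : E * Eᵀ = 1) (heig : ∀ i, L *ᵥ E i = lam i • E i) :
    L = Eᵀ * diagonal lam * E := by
  have hLE : L * Eᵀ = Eᵀ * diagonal lam := by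
    ext k i
    rw [mul_diagonal, transpose_apply, mul_comm (E i k)]
    exact congrFun (heig i) k
  calc L = L * (Eᵀ * E) := by rw [mul_eq_one_comm.mp hE, Matrix.mul_one]
    _ = Eᵀ * diagonal lam * E := by rw [← Matrix.mul_assoc, hLE]

lemma one_add_smul_transpose_mul_diagonal_mul (hE : E * Eᵀ = 1) (σ : ℝ) (lam : ι → ℝ) :
    1 + σ • (Eᵀ * diagonal lam * E) = Eᵀ * diagonal (fun i => 1 + σ * lam i) * E := by
  have hdiag : diagonal (fun i => 1 + σ * lam i) = 1 + σ • diagonal lam := by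
    rw [← diagonal_one, ← diagonal_smul, diagonal_add]
    rfl
  rw [hdiag, Matrix.mul_add, Matrix.add_mul, Matrix.mul_one, mul_eq_one_comm.mp hE,
    Matrix.mul_smul, Matrix.smul_mul]

lemma inv_transpose_mul_diagonal_mul (hE : E * Eᵀ = 1) {c : ι → ℝ} (hc : ∀ i, c i ≠ 0) :
    (Eᵀ * diagonal c * E)⁻¹ = Eᵀ * diagonal c⁻¹ * E := by
  refine inv_eq_right_inv ?_
  calc Eᵀ * diagonal c * E * (Eᵀ * diagonal c⁻¹ * E)
      = Eᵀ * (diagonal c * (E * Eᵀ) * diagonal c⁻¹) * E := by simp only [Matrix.mul_assoc]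
    _ = 1 := by
      have hcc : (fun i => c i * c⁻¹ i) = fun _ => 1 := funext fun i => mul_inv_cancel₀ (hc i)
      rw [hE, Matrix.mul_one, diagonal_mul_diagonal, hcc, diagonal_one, Matrix.mul_one,
        mul_eq_one_comm.mp hE]

lemma transpose_mulVec_dotProduct_self (hE : E * Eᵀ = 1) (y : ι → ℝ) :
    (Eᵀ *ᵥ y) ⬝ᵥ (Eᵀ *ᵥ y) = y ⬝ᵥ y := by
  rw [dotProduct_mulVec, vecMul_transpose, mulVec_mulVec, hE, one_mulVec]

lemma sum_sq_transpose_mul_diagonal_mul_mulVec_add_sub (hE : E * Eᵀ = 1) (c v n : ι → ℝ) :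
    ∑ k, (((Eᵀ * diagonal c * E) *ᵥ (v + n)) k - v k) ^ 2
      = ∑ i, ((c i - 1) * (E *ᵥ v) i + (c i • E i) ⬝ᵥ n) ^ 2 := by
  have hv : v = Eᵀ *ᵥ (E *ᵥ v) := by rw [mulVec_mulVec, mul_eq_one_comm.mp hE, one_mulVec]
  have hw : (Eᵀ * diagonal c * E) *ᵥ (v + n) - v
      = Eᵀ *ᵥ fun i => (c i - 1) * (E *ᵥ v) i + (c i • E i) ⬝ᵥ n := by
    nth_rw 2 [hv]
    rw [← mulVec_mulVec, ← mulVec_mulVec, ← mulVec_sub]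
    congr 1
    ext i
    simp only [Pi.sub_apply, mulVec_diagonal, mulVec_add, Pi.add_apply, smul_dotProduct,
      smul_eq_mul]
    rw [show (E *ᵥ n) i = E i ⬝ᵥ n from rfl]
    ring
  have := congrArg (fun w => w ⬝ᵥ w) hw
  simp only [transpose_mulVec_dotProduct_self hE] at this
  simpa only [dotProduct, sq, Pi.sub_apply] using this

end Matrix

open Matrix

theorem laplacian_smoothing_bias_variance_general (d : ℕ)
    (L : Matrix (Fin d) (Fin d) ℝ)
    (e : Fin d → Fin d → ℝ) (lam : Fin d → ℝ)
    (horth : ∀ i j, ∑ k, e i k * e j k = if i = j then (1 : ℝ) else 0)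
    (heig : ∀ i, L.mulVec (e i) = lam i • e i)
    (hlam : ∀ i, 0 ≤ lam i)
    (σ : ℝ) (hσ : 0 ≤ σ) (v : Fin d → ℝ) (ν : ℝ≥0) :
    (∫ n : Fin d → ℝ,
        ∑ k, ((((1 : Matrix (Fin d) (Fin d) ℝ) + σ • L)⁻¹.mulVec (v + n)) k - v k) ^ 2
        ∂(Measure.pi fun _ : Fin d => gaussianReal 0 (ν ^ 2)))
      = (∑ i, σ ^ 2 * lam i ^ 2 / (1 + σ * lam i) ^ 2 * (∑ k, v k * e i k) ^ 2)
        + ∑ i, (ν : ℝ) ^ 2 / (1 + σ * lam i) ^ 2 := by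
  set E : Matrix (Fin d) (Fin d) ℝ := of e
  have hE : E * Eᵀ = 1 := by
    ext i j
    simpa [E, mul_apply, one_apply] using horth i j
  have hpos : ∀ i, 0 < 1 + σ * lam i := fun i =>
    add_pos_of_pos_of_nonneg one_pos (mul_nonneg hσ (hlam i))
  rw [eq_transpose_mul_diagonal_mul_of_mulVec_eq_smul hE heig,
    one_add_smul_transpose_mul_diagonal_mul hE, inv_transpose_mul_diagonal_mul hE
      fun i => (hpos i).ne']
  simp_rw [sum_sq_transpose_mul_diagonal_mul_mulVec_add_sub hE]
  rw [integral_sum_const_add_dotProduct_sq_pi (fun _ => memLp_id_gaussianReal 2)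
    (fun _ => integral_id_gaussianReal) (fun _ => variance_id_gaussianReal),
    ← Finset.sum_add_distrib]
  refine Finset.sum_congr rfl fun i _ => ?_
  have hnorm : E i ⬝ᵥ E i = 1 := (horth i i).trans (if_pos rfl)
  have hcoord : (E *ᵥ v) i = ∑ k, v k * e i k := by simp [E, mulVec, dotProduct, mul_comm]
  rw [hcoord, smul_dotProduct, dotProduct_smul, hnorm]
  have hne := (hpos i).ne'
  simp only [Pi.inv_apply, smul_eq_mul, NNReal.coe_pow]
  field_simp
  ring

/-- Bias–variance decomposition for the Laplacian smoothing estimate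
`v̂ = (I + σL)⁻¹ (v + n)`, where `L` is symmetric positive semidefinite with
orthonormal eigenbasis `e` and eigenvalues `lam`, `σ ≥ 0`, and `n` has i.i.d.
centered Gaussian coordinates of variance `ν²`:
`E‖v̂ − v‖² = Σᵢ (σ²λᵢ²/(1+σλᵢ)²)⟨v,eᵢ⟩² + Σᵢ ν²/(1+σλᵢ)²`. -/
theorem laplacian_smoothing_bias_variance (d : ℕ)
    (L : Matrix (Fin d) (Fin d) ℝ) (hL : L.IsSymm)
    (e : Fin d → Fin d → ℝ) (lam : Fin d → ℝ)
    (horth : ∀ i j, ∑ k, e i k * e j k = if i = j then (1 : ℝ) else 0)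
    (heig : ∀ i, L.mulVec (e i) = lam i • e i)
    (hlam : ∀ i, 0 ≤ lam i)
    (σ : ℝ) (hσ : 0 ≤ σ) (v : Fin d → ℝ) (ν : ℝ≥0) :
    (∫ n : Fin d → ℝ,
        ∑ k, ((((1 : Matrix (Fin d) (Fin d) ℝ) + σ • L)⁻¹.mulVec (v + n)) k - v k) ^ 2
        ∂(Measure.pi fun _ : Fin d => gaussianReal 0 (ν ^ 2)))
      = (∑ i, σ ^ 2 * lam i ^ 2 / (1 + σ * lam i) ^ 2 * (∑ k, v k * e i k) ^ 2)
        + ∑ i, (ν : ℝ) ^ 2 / (1 + σ * lam i) ^ 2 :=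
  laplacian_smoothing_bias_variance_general d L e lam horth heig hlam σ hσ v ν
end

section
/- Let α ≥ 2 be an integer, τ ∈ (0,1], and ν > 0 with ν² ≥ 2/3. Assume that α − 1 ≤ (2/3)·ν²·ln(1/(τα(1+ν²))). Then (1/(α−1))·ln( 1 + τ²·C(α,2)·min{ 4(e^{1/ν²} − 1), 2e^{1/ν²} } + Σ_{j=3}^{α} τ^j·C(α,j)·2·e^{j(j−1)/(2ν²)} ) ≤ 3.5·α·τ²/ν². (This is the quantitative core of the claim that a Gaussian mechanism with noise level ν applied to a uniformly subsampled dataset with sampling ratio τ satisfies (α, 3.5τ²α/ν²)-Rényi differential privacy.) -/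
/-!
Since `log (1 + X) ≤ X`, it suffices to bound the two parts of `X`. With `x = 1/ν² ≤ 3/2`,
convexity of `exp` gives `min (4 (eˣ - 1)) (2 eˣ) ≤ 6x`, so the `j = 2` term is at most
`3α(α-1)τ²/ν²`. For `3 ≤ j ≤ α` the hypothesis gives `j(j-1)/(2ν²) ≤ (j-2) log (1/(τα(1+ν²)))`,
and together with `2·3^(j-2)·C(α,j) ≤ α^j` the `j`-th term is at most `(τα)² (3(1+ν²))^-(j-2)`.
Summing this geometric series gives `(τα)²/(3ν²+2) ≤ α(α-1)τ²/(2ν²)`.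
-/

open Real Finset

theorem exp_le_affine_of_mem_Icc {a b c d x : ℝ} (hx : x ∈ Set.Icc a b)
    (ha : exp a ≤ c * a + d) (hb : exp b ≤ c * b + d) : exp x ≤ c * x + d := by
  have hconv : ConvexOn ℝ Set.univ (fun y ↦ exp y - (c * y + d)) :=
    convexOn_exp.sub (((LinearMap.mulLeft ℝ c).concaveOn convex_univ).add_const d)
  exact sub_nonpos.1 <| (hconv.le_max_of_mem_Icc (Set.mem_univ a) (Set.mem_univ b) hx).trans
    (max_le (sub_nonpos.2 ha) (sub_nonpos.2 hb))

theorem exp_div_le_of_pow_le {m n : ℕ} (hn : n ≠ 0) {c : ℝ} (hc : 0 ≤ c)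
    (h : (2.7182818286 : ℝ) ^ m ≤ c ^ n) : exp (m / n) ≤ c := by
  rw [← pow_le_pow_iff_left₀ (exp_pos _).le hc hn, ← exp_nat_mul, mul_div_cancel₀ _ (by positivity),
    ← exp_one_pow]
  exact (pow_le_pow_left₀ (exp_pos 1).le exp_one_lt_d9.le m).trans h

theorem min_four_mul_exp_sub_one_two_mul_exp_le {x : ℝ} (hx0 : 0 ≤ x) (hx : x ≤ 3 / 2) :
    min (4 * (exp x - 1)) (2 * exp x) ≤ 6 * x := by
  have h07 : exp (7 / 10) ≤ 2.05 := by
    exact_mod_cast exp_div_le_of_pow_le (m := 7) (n := 10) (by norm_num) (by norm_num) (by norm_num)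
  have h15 : exp (3 / 2) ≤ 4.5 := by
    exact_mod_cast exp_div_le_of_pow_le (m := 3) (n := 2) (by norm_num) (by norm_num) (by norm_num)
  rcases le_total x (7 / 10) with hsmall | hlarge
  · have : exp x ≤ 3 / 2 * x + 1 :=
      exp_le_affine_of_mem_Icc ⟨hx0, hsmall⟩ (by norm_num) (by linarith)
    exact (min_le_left _ _).trans (by linarith)
  · have : exp x ≤ 3 * x + 0 :=
      exp_le_affine_of_mem_Icc ⟨hlarge, hx⟩ (by linarith) (by linarith)
    exact (min_le_right _ _).trans (by linarith)

theorem two_mul_three_pow_mul_choose_le (n : ℕ) {k : ℕ} (hk : 2 ≤ k) :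
    2 * 3 ^ (k - 2) * n.choose k ≤ n ^ k := by
  obtain ⟨i, rfl⟩ := Nat.exists_eq_add_of_le hk
  calc 2 * 3 ^ (2 + i - 2) * n.choose (2 + i)
      ≤ (2 + i).factorial * n.choose (2 + i) := by
        rw [Nat.add_sub_cancel_left]
        exact Nat.mul_le_mul_right _ (Nat.factorial_mul_pow_le_factorial (m := 2) (n := i))
    _ = n.descFactorial (2 + i) := (Nat.descFactorial_eq_factorial_mul_choose _ _).symm
    _ ≤ n ^ (2 + i) := Nat.descFactorial_le_pow _ _

theorem exp_le_pow_sub_two_of_le_log {α j : ℕ} {B s : ℝ} (hB : 0 < B) (hs : 0 < s)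
    (hcond : (α : ℝ) - 1 ≤ 2 / 3 * s * log B) (hj3 : 3 ≤ j) (hjα : j ≤ α) :
    exp (j * (j - 1) / (2 * s)) ≤ B ^ (j - 2) := by
  rw [← exp_log hB, ← exp_nat_mul, exp_le_exp, div_le_iff₀ (by positivity), Nat.cast_sub (by omega)]
  have hj3' : (3 : ℝ) ≤ j := by exact_mod_cast hj3
  have hjα' : (j : ℝ) ≤ α := by exact_mod_cast hjα
  push_cast
  nlinarith [mul_le_mul_of_nonneg_left hcond (by linarith : (0 : ℝ) ≤ 3 * (j - 2)),
    mul_le_mul_of_nonneg_left hjα' (by linarith : (0 : ℝ) ≤ 3 * (j - 2))]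

theorem subsampled_term_le {α j : ℕ} {τ s : ℝ} (hτ : 0 < τ) (hs : 0 < s)
    (hcond : (α : ℝ) - 1 ≤ 2 / 3 * s * log (1 / (τ * α * (1 + s)))) (hj3 : 3 ≤ j) (hjα : j ≤ α) :
    τ ^ j * (α.choose j : ℝ) * 2 * exp (j * (j - 1) / (2 * s))
      ≤ (τ * α) ^ 2 * (1 / (3 * (1 + s))) ^ (j - 2) := by
  have hα : (0 : ℝ) < α := by exact_mod_cast (show 0 < α by omega)
  have hchoose : (α.choose j : ℝ) * 2 ≤ α ^ j / 3 ^ (j - 2) := by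
    rw [le_div_iff₀ (by positivity)]
    exact_mod_cast (two_mul_three_pow_mul_choose_le α (by omega : 2 ≤ j)).trans_eq' (by ring)
  have hexp := exp_le_pow_sub_two_of_le_log (by positivity) hs hcond hj3 hjα
  calc τ ^ j * (α.choose j : ℝ) * 2 * exp (j * (j - 1) / (2 * s))
      = τ ^ j * ((α.choose j : ℝ) * 2) * exp (j * (j - 1) / (2 * s)) := by ring
    _ ≤ τ ^ j * (α ^ j / 3 ^ (j - 2)) * (1 / (τ * α * (1 + s))) ^ (j - 2) := by gcongr
    _ = (τ * α) ^ 2 * (1 / (3 * (1 + s))) ^ (j - 2) := by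
        obtain ⟨k, rfl⟩ := Nat.exists_eq_add_of_le' (by omega : 2 ≤ j)
        rw [Nat.add_sub_cancel]
        simp only [one_div_pow, mul_pow, pow_add]
        field_simp

theorem sum_Icc_three_pow_sub_two_le {r : ℝ} (h0 : 0 ≤ r) (h1 : r < 1) (n : ℕ) :
    ∑ j ∈ Icc 3 n, r ^ (j - 2) ≤ r / (1 - r) :=
  calc ∑ j ∈ Icc 3 n, r ^ (j - 2)
      ≤ ∑ j ∈ Ico (1 + 2) (n + 2), r ^ (j - 2) :=
        sum_le_sum_of_subset_of_nonneg (fun j ↦ by simp only [mem_Icc, mem_Ico]; omega)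
          (fun _ _ _ ↦ by positivity)
    _ = ∑ k ∈ Ico 1 n, r ^ k := by
        rw [← sum_Ico_add' (fun j ↦ r ^ (j - 2))]
        simp only [Nat.add_sub_cancel]
    _ ≤ r / (1 - r) := (geom_sum_Ico_le_of_lt_one h0 h1).trans_eq (by rw [pow_one])

theorem higher_order_sum_le {α : ℕ} {τ s : ℝ} (hτ : 0 < τ) (hs : 0 < s)
    (hcond : (α : ℝ) - 1 ≤ 2 / 3 * s * log (1 / (τ * α * (1 + s)))) :
    ∑ j ∈ Icc 3 α, τ ^ j * (α.choose j : ℝ) * 2 * exp (j * (j - 1) / (2 * s))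
      ≤ α * (α - 1) * τ ^ 2 / s / 2 := by
  rcases lt_or_ge α 3 with hα | hα
  · rw [Icc_eq_empty (by omega), sum_empty]
    interval_cases α <;> norm_num
    positivity
  have hα' : (3 : ℝ) ≤ α := by exact_mod_cast hα
  calc ∑ j ∈ Icc 3 α, τ ^ j * (α.choose j : ℝ) * 2 * exp (j * (j - 1) / (2 * s))
      ≤ ∑ j ∈ Icc 3 α, (τ * α) ^ 2 * (1 / (3 * (1 + s))) ^ (j - 2) :=
        sum_le_sum fun j hj ↦ subsampled_term_le hτ hs hcond (mem_Icc.1 hj).1 (mem_Icc.1 hj).2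
    _ = (τ * α) ^ 2 * ∑ j ∈ Icc 3 α, (1 / (3 * (1 + s))) ^ (j - 2) := (mul_sum ..).symm
    _ ≤ (τ * α) ^ 2 * (1 / (3 * (1 + s)) / (1 - 1 / (3 * (1 + s)))) := by
        gcongr
        exact sum_Icc_three_pow_sub_two_le (by positivity)
          ((div_lt_one (by positivity)).2 (by linarith)) α
    _ = (τ * α) ^ 2 / (3 * s + 2) := by
        have h : 1 - 1 / (3 * (1 + s)) = (3 * s + 2) / (3 * (1 + s)) := by field_simp; ring
        rw [h, div_div_div_cancel_right₀ (by positivity), mul_one_div]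
    _ ≤ α * (α - 1) * τ ^ 2 / s / 2 := by
        rw [div_div, div_le_div_iff₀ (by positivity) (by positivity)]
        nlinarith [mul_nonneg (mul_nonneg (sq_nonneg τ) (by linarith : (0 : ℝ) ≤ α))
          (by nlinarith : (0 : ℝ) ≤ s * (α - 3) + 2 * (α - 1))]

theorem second_order_term_le (α : ℕ) (τ : ℝ) {s : ℝ} (hs : 2 / 3 ≤ s) :
    τ ^ 2 * (α.choose 2 : ℝ) * min (4 * (exp (1 / s) - 1)) (2 * exp (1 / s))
      ≤ 3 * (α * (α - 1) * τ ^ 2 / s) := by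
  have hs0 : 0 < s := by linarith
  calc τ ^ 2 * (α.choose 2 : ℝ) * min (4 * (exp (1 / s) - 1)) (2 * exp (1 / s))
      ≤ τ ^ 2 * (α.choose 2 : ℝ) * (6 * (1 / s)) := by
        gcongr
        exact min_four_mul_exp_sub_one_two_mul_exp_le (by positivity)
          (by rw [div_le_iff₀ hs0]; linarith)
    _ = 3 * (α * (α - 1) * τ ^ 2 / s) := by rw [Nat.cast_choose_two]; field_simp; ring

open Finset in
theorem rdp_uniform_subsampling_bound_general (α : ℕ) (hα : 2 ≤ α) (τ ν : ℝ)
    (hτ0 : 0 < τ) (hν : 2 / 3 ≤ ν ^ 2)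
    (hcond : (α : ℝ) - 1 ≤ 2 / 3 * ν ^ 2 * Real.log (1 / (τ * α * (1 + ν ^ 2)))) :
    (1 / ((α : ℝ) - 1)) * Real.log
      (1 + τ ^ 2 * (α.choose 2 : ℝ) *
          min (4 * (Real.exp (1 / ν ^ 2) - 1)) (2 * Real.exp (1 / ν ^ 2))
        + ∑ j ∈ Icc 3 α, τ ^ j * (α.choose j : ℝ) * 2 *
            Real.exp ((j : ℝ) * ((j : ℝ) - 1) / (2 * ν ^ 2)))
      ≤ 3.5 * α * τ ^ 2 / ν ^ 2 := by
  have hα1 : (0 : ℝ) < α - 1 := by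
    have : (2 : ℝ) ≤ α := by exact_mod_cast hα
    linarith
  have hs : 0 < ν ^ 2 := by linarith
  set second := τ ^ 2 * (α.choose 2 : ℝ) *
    min (4 * (exp (1 / ν ^ 2) - 1)) (2 * exp (1 / ν ^ 2))
  set higher := ∑ j ∈ Icc 3 α, τ ^ j * (α.choose j : ℝ) * 2 * exp (j * (j - 1) / (2 * ν ^ 2))
  have hmin : 0 ≤ min (4 * (exp (1 / ν ^ 2) - 1)) (2 * exp (1 / ν ^ 2)) :=
    le_min (by linarith [one_le_exp (show 0 ≤ 1 / ν ^ 2 by positivity)]) (by positivity)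
  have hsecond_nonneg : 0 ≤ second := mul_nonneg (by positivity) hmin
  have hhigher_nonneg : 0 ≤ higher := sum_nonneg fun _ _ ↦ by positivity
  have hsecond : second ≤ 3 * (α * (α - 1) * τ ^ 2 / ν ^ 2) := second_order_term_le α τ hν
  have hhigher : higher ≤ α * (α - 1) * τ ^ 2 / ν ^ 2 / 2 := higher_order_sum_le hτ0 hs hcond
  calc 1 / ((α : ℝ) - 1) * log (1 + second + higher)
      ≤ 1 / ((α : ℝ) - 1) * (second + higher) := by
        gcongr
        linarith [log_le_sub_one_of_pos (by linarith : 0 < 1 + second + higher)]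
    _ ≤ 1 / ((α : ℝ) - 1) * (3.5 * (α * (α - 1) * τ ^ 2 / ν ^ 2)) := by
        gcongr
        linarith
    _ = 3.5 * α * τ ^ 2 / ν ^ 2 := by field_simp

open Finset in
/-- Quantitative core of the RDP bound for the Gaussian mechanism with
uniform subsampling: under the stated conditions on `α`, `τ`, `ν`,
the Rényi divergence bound is at most `3.5·α·τ²/ν²`. -/
theorem rdp_uniform_subsampling_bound (α : ℕ) (hα : 2 ≤ α) (τ ν : ℝ)
    (hτ0 : 0 < τ) (hτ1 : τ ≤ 1) (hν0 : 0 < ν) (hν : 2 / 3 ≤ ν ^ 2)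
    (hcond : (α : ℝ) - 1 ≤ 2 / 3 * ν ^ 2 * Real.log (1 / (τ * α * (1 + ν ^ 2)))) :
    (1 / ((α : ℝ) - 1)) * Real.log
      (1 + τ ^ 2 * (α.choose 2 : ℝ) *
          min (4 * (Real.exp (1 / ν ^ 2) - 1)) (2 * Real.exp (1 / ν ^ 2))
        + ∑ j ∈ Icc 3 α, τ ^ j * (α.choose j : ℝ) * 2 *
            Real.exp ((j : ℝ) * ((j : ℝ) - 1) / (2 * ν ^ 2)))
      ≤ 3.5 * α * τ ^ 2 / ν ^ 2 :=
  rdp_uniform_subsampling_bound_general α hα τ ν hτ0 hν hcond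
end

section
/- Let α ≥ 2 be an integer, τ ∈ (0,1], and ν > 0 with ν² ≥ 5/9. Assume that α − 1 ≤ (2/3)·ν²·ln(1/(τα(1+ν²))). Then (1/(α−1))·ln( (ατ − τ + 1)(1−τ)^{α−1} + C(α,2)·(1−τ)^{α−2}·τ²·e^{1/ν²} + Σ_{j=3}^{α} C(α,j)·(1−τ)^{α−j}·τ^j·e^{j(j−1)/(2ν²)} ) ≤ 2·α·τ²/ν². (This is the quantitative core of the claim that a Gaussian mechanism with noise level ν applied to a Poisson-subsampled dataset with inclusion probability τ satisfies (α, 2τ²α/ν²)-Rényi differential privacy.) -/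
/-!
By the binomial theorem the argument of the logarithm is `1 + Q + T`, where `Q` and `T` are
the excesses of the `j = 2` term and of the terms `j ≥ 3` over their binomial weights, so by
`log (1 + x) ≤ x` it suffices to bound `Q + T` by `(α - 1) · 2ατ²/ν²`. Convexity of `exp` on
`[0, 2]` gives `Q ≤ α(α - 1)τ²(e² - 1)/(4ν²)`. The hypothesis on `α` says
`ατ(1 + ν²) ≤ exp(-3(α - 1)/(2ν²))`, so in the `j`-th term `(ατ)^(j - 2)` absorbs the Gaussian
factor `exp(j(j - 1)/(2ν²))`, because `j(j - 1) ≤ 3(j - 2)(α - 1)` for `3 ≤ j ≤ α`; what is left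
is dominated by a geometric series of ratio `9/56`, whence `T ≤ 28(ατ)²/(141ν²)`.
-/

open Finset Real
open scoped Nat

lemma exp_le_one_add_mul_of_le {t b : ℝ} (ht : 0 ≤ t) (htb : t ≤ b) (hb : 0 < b) :
    exp t ≤ 1 + t * (exp b - 1) / b := by
  have h := convexOn_exp.2 (Set.mem_univ 0) (Set.mem_univ b)
    (sub_nonneg.2 ((div_le_one hb).2 htb)) (by positivity : 0 ≤ t / b) (by ring)
  simp only [smul_eq_mul, mul_zero, zero_add, exp_zero, div_mul_cancel₀ t hb.ne'] at h
  linarith [show t / b * exp b - t / b = t * (exp b - 1) / b by ring]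

lemma exp_two_lt : exp 2 < 7.4 := by
  have h := exp_one_lt_d9
  rw [show (2 : ℝ) = 1 + 1 by norm_num, exp_add]
  nlinarith [exp_pos 1]

lemma choose_mul_pow_le_pow_div_factorial (n j : ℕ) {τ : ℝ} (hτ0 : 0 ≤ τ) (hτ1 : τ ≤ 1) :
    (n.choose j : ℝ) * (1 - τ) ^ (n - j) * τ ^ j ≤ (n * τ) ^ j / j ! :=
  calc (n.choose j : ℝ) * (1 - τ) ^ (n - j) * τ ^ j ≤ (n : ℝ) ^ j / j ! * 1 * τ ^ j := by
        gcongr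
        · exact Nat.choose_le_pow_div j n
        · exact pow_le_one₀ (by linarith) (by linarith)
    _ = (n * τ) ^ j / j ! := by ring

lemma binomial_first_terms_add_tail_eq_one {R : Type*} [CommRing R] {α : ℕ} (hα : 2 ≤ α)
    (τ : R) :
    ((α : R) * τ - τ + 1) * (1 - τ) ^ (α - 1) + (α.choose 2 : R) * (1 - τ) ^ (α - 2) * τ ^ 2
      + ∑ j ∈ Icc 3 α, (α.choose j : R) * (1 - τ) ^ (α - j) * τ ^ j = 1 := by
  obtain ⟨β, rfl⟩ : ∃ β, α = β + 2 := ⟨α - 2, by omega⟩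
  have h := add_pow τ (1 - τ) (β + 2)
  rw [add_sub_cancel, one_pow, ← sum_range_add_sum_Ico _ (by omega : 3 ≤ β + 2 + 1),
    Ico_add_one_right_eq_Icc, sum_range_succ, sum_range_succ, sum_range_one,
    sum_congr rfl fun j _ => by rw [mul_comm, ← mul_assoc, mul_right_comm]] at h
  simp only [Nat.choose_zero_right, Nat.choose_one_right, pow_zero, pow_one, Nat.sub_zero,
    Nat.cast_one, show β + 2 - 1 = β + 1 by omega, show β + 2 - 2 = β by omega] at h ⊢
  linear_combination -h

lemma binomial_weighted_eq_one_add {R : Type*} [CommRing R] {α : ℕ} (hα : 2 ≤ α) (τ X : R)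
    (f : ℕ → R) :
    ((α : R) * τ - τ + 1) * (1 - τ) ^ (α - 1) + (α.choose 2 : R) * (1 - τ) ^ (α - 2) * τ ^ 2 * X
      + ∑ j ∈ Icc 3 α, (α.choose j : R) * (1 - τ) ^ (α - j) * τ ^ j * f j
      = 1 + (α.choose 2 : R) * (1 - τ) ^ (α - 2) * τ ^ 2 * (X - 1)
        + ∑ j ∈ Icc 3 α, (α.choose j : R) * (1 - τ) ^ (α - j) * τ ^ j * (f j - 1) := by
  simp only [mul_sub, mul_one, sum_sub_distrib]
  linear_combination binomial_first_terms_add_tail_eq_one hα τ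

lemma mul_le_exp_of_le_log {α τ ν : ℝ} (hP : 0 < τ * α * (1 + ν ^ 2)) (hν : 0 < ν ^ 2)
    (hcond : α - 1 ≤ 2 / 3 * ν ^ 2 * log (1 / (τ * α * (1 + ν ^ 2)))) :
    α * τ * (1 + ν ^ 2) ≤ exp (-(3 * (α - 1) / (2 * ν ^ 2))) := by
  rw [one_div, log_inv] at hcond
  have hlog : log (τ * α * (1 + ν ^ 2)) ≤ -(3 * (α - 1) / (2 * ν ^ 2)) := by
    rw [le_neg, div_le_iff₀ (by positivity)]
    linarith
  rw [mul_comm α τ]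
  exact (log_le_iff_le_exp hP).1 hlog

lemma choose_two_mul_exp_sub_one_le {α : ℕ} {τ ν : ℝ} (hτ0 : 0 ≤ τ) (hτ1 : τ ≤ 1)
    (hν : 1 / 2 ≤ ν ^ 2) :
    (α.choose 2 : ℝ) * (1 - τ) ^ (α - 2) * τ ^ 2 * (exp (1 / ν ^ 2) - 1)
      ≤ α * (α - 1) * τ ^ 2 * (exp 2 - 1) / (4 * ν ^ 2) := by
  have hν2 : 0 < ν ^ 2 := by linarith
  have hexp : exp (1 / ν ^ 2) - 1 ≤ (exp 2 - 1) / (2 * ν ^ 2) := by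
    have := exp_le_one_add_mul_of_le (by positivity : 0 ≤ 1 / ν ^ 2)
      ((div_le_iff₀ hν2).2 (by linarith)) two_pos
    calc exp (1 / ν ^ 2) - 1 ≤ 1 / ν ^ 2 * (exp 2 - 1) / 2 := by linarith
      _ = (exp 2 - 1) / (2 * ν ^ 2) := by field_simp
  calc (α.choose 2 : ℝ) * (1 - τ) ^ (α - 2) * τ ^ 2 * (exp (1 / ν ^ 2) - 1)
      ≤ (α.choose 2 : ℝ) * 1 * τ ^ 2 * ((exp 2 - 1) / (2 * ν ^ 2)) := by
        gcongr
        · linarith [add_one_le_exp (1 / ν ^ 2), show 0 ≤ 1 / ν ^ 2 by positivity]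
        · exact pow_le_one₀ (by linarith) (by linarith)
    _ = α * (α - 1) * τ ^ 2 * (exp 2 - 1) / (4 * ν ^ 2) := by
        rw [Nat.cast_choose_two]; field_simp; ring

lemma pow_mul_exp_le_of_mul_le_exp {α : ℕ} {k : ℕ} {x ν : ℝ} (hx : 0 ≤ x) (hν : 0 < ν ^ 2)
    (hq : x * (1 + ν ^ 2) ≤ exp (-(3 * ((α : ℝ) - 1) / (2 * ν ^ 2)))) (hk : k + 3 ≤ α) :
    x ^ (k + 1) * exp (((k + 3 : ℕ) : ℝ) * ((k + 3 : ℕ) - 1) / (2 * ν ^ 2))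
      ≤ (1 / (1 + ν ^ 2)) ^ (k + 1) := by
  have hkα : (k : ℝ) + 3 ≤ α := by exact_mod_cast hk
  have hx' : x ≤ exp (-(3 * ((α : ℝ) - 1) / (2 * ν ^ 2))) * (1 / (1 + ν ^ 2)) := by
    rwa [mul_one_div, le_div_iff₀ (by positivity)]
  have hexp : exp (-(3 * ((α : ℝ) - 1) / (2 * ν ^ 2))) ^ (k + 1)
      * exp (((k + 3 : ℕ) : ℝ) * ((k + 3 : ℕ) - 1) / (2 * ν ^ 2)) ≤ 1 := by
    rw [← exp_nat_mul, ← exp_add, exp_le_one_iff, mul_neg, neg_add_nonpos_iff, mul_div_assoc',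
      div_le_div_iff_of_pos_right (by positivity)]
    push_cast
    nlinarith
  calc x ^ (k + 1) * exp (((k + 3 : ℕ) : ℝ) * ((k + 3 : ℕ) - 1) / (2 * ν ^ 2))
      ≤ (exp (-(3 * ((α : ℝ) - 1) / (2 * ν ^ 2))) * (1 / (1 + ν ^ 2))) ^ (k + 1)
        * exp (((k + 3 : ℕ) : ℝ) * ((k + 3 : ℕ) - 1) / (2 * ν ^ 2)) := by gcongr
    _ = (exp (-(3 * ((α : ℝ) - 1) / (2 * ν ^ 2))) ^ (k + 1)
        * exp (((k + 3 : ℕ) : ℝ) * ((k + 3 : ℕ) - 1) / (2 * ν ^ 2)))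
        * (1 / (1 + ν ^ 2)) ^ (k + 1) := by ring
    _ ≤ (1 / (1 + ν ^ 2)) ^ (k + 1) := mul_le_of_le_one_left (by positivity) hexp

lemma gaussian_tail_term_le {α j : ℕ} {τ ν : ℝ} (hτ0 : 0 ≤ τ) (hτ1 : τ ≤ 1)
    (hν : 5 / 9 ≤ ν ^ 2) (hq : α * τ * (1 + ν ^ 2) ≤ exp (-(3 * ((α : ℝ) - 1) / (2 * ν ^ 2))))
    (hj : j ∈ Icc 3 α) :
    (α.choose j : ℝ) * (1 - τ) ^ (α - j) * τ ^ j * exp ((j : ℝ) * ((j : ℝ) - 1) / (2 * ν ^ 2))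
      ≤ (α * τ) ^ 2 / (6 * ν ^ 2) * (9 / 56) ^ (j - 3) := by
  obtain ⟨k, rfl⟩ : ∃ k, j = k + 3 := ⟨j - 3, by grind⟩
  have hν2 : 0 < ν ^ 2 := by linarith
  have hfact : ((6 * 4 ^ k : ℕ) : ℝ) ≤ (k + 3)! := by
    rw [add_comm k]
    exact_mod_cast Nat.factorial_mul_pow_le_factorial (m := 3) (n := k)
  have hr : 1 / (1 + ν ^ 2) ≤ 1 / ν ^ 2 := by gcongr; linarith
  have hr' : 1 / (1 + ν ^ 2) ≤ 9 / 14 := by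
    rw [div_le_div_iff₀ (by positivity) (by norm_num)]; linarith
  calc (α.choose (k + 3) : ℝ) * (1 - τ) ^ (α - (k + 3)) * τ ^ (k + 3)
        * exp (((k + 3 : ℕ) : ℝ) * ((k + 3 : ℕ) - 1) / (2 * ν ^ 2))
      ≤ (α * τ) ^ (k + 3) / (k + 3)!
        * exp (((k + 3 : ℕ) : ℝ) * ((k + 3 : ℕ) - 1) / (2 * ν ^ 2)) := by
        gcongr
        exact choose_mul_pow_le_pow_div_factorial α (k + 3) hτ0 hτ1
    _ = (α * τ) ^ 2 / (k + 3)! * ((α * τ) ^ (k + 1)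
        * exp (((k + 3 : ℕ) : ℝ) * ((k + 3 : ℕ) - 1) / (2 * ν ^ 2))) := by ring
    _ ≤ (α * τ) ^ 2 / ((6 * 4 ^ k : ℕ) : ℝ) * (1 / (1 + ν ^ 2)) ^ (k + 1) := by
        gcongr
        exact pow_mul_exp_le_of_mul_le_exp (by positivity) hν2 hq (mem_Icc.1 hj).2
    _ = (α * τ) ^ 2 / 6 * (1 / (1 + ν ^ 2)) * (1 / (1 + ν ^ 2) / 4) ^ k := by
        generalize 1 / (1 + ν ^ 2) = r
        rw [div_pow]; push_cast; ring
    _ ≤ (α * τ) ^ 2 / 6 * (1 / ν ^ 2) * (9 / 14 / 4) ^ k := by gcongr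
    _ = (α * τ) ^ 2 / (6 * ν ^ 2) * (9 / 56) ^ (k + 3 - 3) := by
        rw [Nat.add_sub_cancel]; field_simp; norm_num

lemma gaussian_tail_sum_le {α : ℕ} {τ ν : ℝ} (hτ0 : 0 ≤ τ) (hτ1 : τ ≤ 1)
    (hν : 5 / 9 ≤ ν ^ 2) (hq : α * τ * (1 + ν ^ 2) ≤ exp (-(3 * ((α : ℝ) - 1) / (2 * ν ^ 2)))) :
    ∑ j ∈ Icc 3 α, (α.choose j : ℝ) * (1 - τ) ^ (α - j) * τ ^ j
        * exp ((j : ℝ) * ((j : ℝ) - 1) / (2 * ν ^ 2))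
      ≤ 28 * (α * τ) ^ 2 / (141 * ν ^ 2) := by
  have hν2 : 0 < ν ^ 2 := by linarith
  have hgeom : ∑ i ∈ range (α + 1 - 3), (9 / 56 : ℝ) ^ i ≤ 56 / 47 := by
    have := geom_sum_Ico_le_of_lt_one (m := 0) (n := α + 1 - 3) (x := (9 / 56 : ℝ))
      (by norm_num) (by norm_num)
    rw [← range_eq_Ico] at this
    norm_num at this ⊢
    exact this
  calc ∑ j ∈ Icc 3 α, (α.choose j : ℝ) * (1 - τ) ^ (α - j) * τ ^ j
        * exp ((j : ℝ) * ((j : ℝ) - 1) / (2 * ν ^ 2))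
      ≤ ∑ j ∈ Icc 3 α, (α * τ) ^ 2 / (6 * ν ^ 2) * (9 / 56) ^ (j - 3) :=
        sum_le_sum fun j hj => gaussian_tail_term_le hτ0 hτ1 hν hq hj
    _ = (α * τ) ^ 2 / (6 * ν ^ 2) * ∑ i ∈ range (α + 1 - 3), (9 / 56 : ℝ) ^ i := by
        rw [← mul_sum, ← Ico_add_one_right_eq_Icc, sum_Ico_eq_sum_range]
        simp
    _ ≤ (α * τ) ^ 2 / (6 * ν ^ 2) * (56 / 47) := by gcongr
    _ = 28 * (α * τ) ^ 2 / (141 * ν ^ 2) := by field_simp; ring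

lemma rdp_bound_coefficients_le {α τ ν : ℝ} (hα : 2 ≤ α) (hν : 0 < ν ^ 2) :
    α * (α - 1) * τ ^ 2 * (exp 2 - 1) / (4 * ν ^ 2) + 28 * (α * τ) ^ 2 / (141 * ν ^ 2)
      ≤ (α - 1) * (2 * α * τ ^ 2 / ν ^ 2) := by
  -- tight: with `α ≤ 2(α - 1)` this needs `(e² - 1)/4 + 56/141 ≤ 2`, i.e. `e² < 7.41`
  have key : (α - 1) * (exp 2 - 1) / 4 + 28 * α / 141 ≤ 2 * (α - 1) := by
    nlinarith [exp_two_lt]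
  calc α * (α - 1) * τ ^ 2 * (exp 2 - 1) / (4 * ν ^ 2) + 28 * (α * τ) ^ 2 / (141 * ν ^ 2)
      = α * τ ^ 2 / ν ^ 2 * ((α - 1) * (exp 2 - 1) / 4 + 28 * α / 141) := by
        field_simp
    _ ≤ α * τ ^ 2 / ν ^ 2 * (2 * (α - 1)) := by gcongr
    _ = (α - 1) * (2 * α * τ ^ 2 / ν ^ 2) := by ring

open Finset in
theorem rdp_poisson_subsampling_bound_general (α : ℕ) (hα : 2 ≤ α) (τ ν : ℝ)
    (hτ0 : 0 < τ) (hτ1 : τ ≤ 1) (hν : 5 / 9 ≤ ν ^ 2)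
    (hcond : (α : ℝ) - 1 ≤ 2 / 3 * ν ^ 2 * Real.log (1 / (τ * α * (1 + ν ^ 2)))) :
    (1 / ((α : ℝ) - 1)) * Real.log
      (((α : ℝ) * τ - τ + 1) * (1 - τ) ^ (α - 1)
        + (α.choose 2 : ℝ) * (1 - τ) ^ (α - 2) * τ ^ 2 * Real.exp (1 / ν ^ 2)
        + ∑ j ∈ Icc 3 α, (α.choose j : ℝ) * (1 - τ) ^ (α - j) * τ ^ j *
            Real.exp ((j : ℝ) * ((j : ℝ) - 1) / (2 * ν ^ 2)))
      ≤ 2 * α * τ ^ 2 / ν ^ 2 := by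
  have hν2 : 0 < ν ^ 2 := by linarith
  have hα' : (2 : ℝ) ≤ α := by exact_mod_cast hα
  have hα1 : 0 < 1 / ((α : ℝ) - 1) := one_div_pos.2 (by linarith)
  have hq := mul_le_exp_of_le_log (by positivity) hν2 hcond
  rw [binomial_weighted_eq_one_add hα]
  set Q := (α.choose 2 : ℝ) * (1 - τ) ^ (α - 2) * τ ^ 2 * (exp (1 / ν ^ 2) - 1)
  set T := ∑ j ∈ Icc 3 α, (α.choose j : ℝ) * (1 - τ) ^ (α - j) * τ ^ j *
    (exp ((j : ℝ) * ((j : ℝ) - 1) / (2 * ν ^ 2)) - 1)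
  have hQ0 : 0 ≤ Q := mul_nonneg (by positivity) (sub_nonneg.2 (one_le_exp (by positivity)))
  have hT0 : 0 ≤ T := sum_nonneg fun j hj => by
    have hj : (3 : ℝ) ≤ j := by exact_mod_cast (mem_Icc.1 hj).1
    have := one_le_exp (div_nonneg (by nlinarith) (by positivity) :
      0 ≤ (j : ℝ) * ((j : ℝ) - 1) / (2 * ν ^ 2))
    exact mul_nonneg (by positivity) (by linarith)
  have hQ := choose_two_mul_exp_sub_one_le (α := α) hτ0.le hτ1 (by linarith : 1 / 2 ≤ ν ^ 2)
  have hT : T ≤ 28 * (α * τ) ^ 2 / (141 * ν ^ 2) :=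
    (sum_le_sum fun j _ => by gcongr; exact sub_le_self _ zero_le_one).trans
      (gaussian_tail_sum_le hτ0.le hτ1 hν hq)
  calc 1 / ((α : ℝ) - 1) * log (1 + Q + T) ≤ 1 / ((α : ℝ) - 1) * (Q + T) := by
        gcongr
        linarith [log_le_sub_one_of_pos (by linarith : 0 < 1 + Q + T)]
    _ ≤ 1 / ((α : ℝ) - 1) * ((α - 1) * (2 * α * τ ^ 2 / ν ^ 2)) := by
        gcongr
        linarith [rdp_bound_coefficients_le (τ := τ) hα' hν2]
    _ = 2 * α * τ ^ 2 / ν ^ 2 := by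
        rw [← mul_assoc, one_div_mul_cancel (by linarith), one_mul]

open Finset in
/-- Quantitative core of the RDP bound for the Gaussian mechanism with
Poisson subsampling: under the stated conditions on `α`, `τ`, `ν`,
the Rényi divergence bound is at most `2·α·τ²/ν²`. -/
theorem rdp_poisson_subsampling_bound (α : ℕ) (hα : 2 ≤ α) (τ ν : ℝ)
    (hτ0 : 0 < τ) (hτ1 : τ ≤ 1) (hν0 : 0 < ν) (hν : 5 / 9 ≤ ν ^ 2)
    (hcond : (α : ℝ) - 1 ≤ 2 / 3 * ν ^ 2 * Real.log (1 / (τ * α * (1 + ν ^ 2)))) :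
    (1 / ((α : ℝ) - 1)) * Real.log
      (((α : ℝ) * τ - τ + 1) * (1 - τ) ^ (α - 1)
        + (α.choose 2 : ℝ) * (1 - τ) ^ (α - 2) * τ ^ 2 * Real.exp (1 / ν ^ 2)
        + ∑ j ∈ Icc 3 α, (α.choose j : ℝ) * (1 - τ) ^ (α - j) * τ ^ j *
            Real.exp ((j : ℝ) * ((j : ℝ) - 1) / (2 * ν ^ 2)))
      ≤ 2 * α * τ ^ 2 / ν ^ 2 :=
  rdp_poisson_subsampling_bound_general α hα τ ν hτ0 hτ1 hν hcond
end

section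
/- Let α ≥ 2 be an integer, τ ∈ (0,1], and ν > 0. Assume that α − 1 ≤ (2/3)·ν²·ln(1/(τα(1+ν²))). Then Σ_{j=3}^{α} τ^j·C(α,j)·2·e^{j(j−1)/(2ν²)} ≤ τ²·C(α,2)·(1/ν²). -/
/-!
With `r = τ α e^{(α-1)/(2ν²)}`, the bounds `C(α,j) ≤ (α-1)/α · α^j/j!` and `j - 1 ≤ α - 1` make the
`j`-th term at most `2 (α-1)/α · r^j/j!`. The hypothesis says `e^{3(α-1)/(2ν²)} ≤ 1/(τα(1+ν²))`,
so `r³ ≤ τ²α²/(1+ν²) ≤ 1`; for `r ≤ 1` the Taylor remainder of `exp` gives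
`∑_{j ≥ 3} r^j/j! ≤ 2r³/9`, and `4/(9(1+ν²)) ≤ 1/(2ν²)` concludes.
-/

open Finset
open scoped Nat

theorem Nat.descFactorial_add_two_le (n k : ℕ) :
    n.descFactorial (k + 2) ≤ n * (n - 1) * n ^ k := by
  rcases n with _ | m
  · simp
  calc (m + 1).descFactorial (k + 2) = (m + 1) * m.descFactorial (k + 1) :=
        Nat.succ_descFactorial_succ m (k + 1)
    _ ≤ (m + 1) * (m * (m + 1) ^ k) := by
        gcongr
        calc m.descFactorial (k + 1) ≤ m ^ (k + 1) := Nat.descFactorial_le_pow m (k + 1)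
          _ = m * m ^ k := pow_succ' ..
          _ ≤ m * (m + 1) ^ k := by gcongr; omega
    _ = (m + 1) * (m + 1 - 1) * (m + 1) ^ k := by simp [mul_assoc]

theorem Nat.choose_le_sub_one_div_mul_pow_div_factorial {K : Type*} [Field K] [LinearOrder K]
    [IsStrictOrderedRing K] {n j : ℕ} (hn : 0 < n) (hj : 2 ≤ j) :
    (n.choose j : K) ≤ (n - 1) / n * (n ^ j / j !) := by
  obtain ⟨k, rfl⟩ := Nat.exists_eq_add_of_le' hj
  have hnat : (k + 2)! * n.choose (k + 2) ≤ n * (n - 1) * n ^ k := by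
    rw [← Nat.descFactorial_eq_factorial_mul_choose]
    exact Nat.descFactorial_add_two_le n k
  have hcast : ((k + 2)! : K) * n.choose (k + 2) ≤ n * (n - 1) * n ^ k := by
    have := (Nat.cast_le (α := K)).2 hnat
    push_cast [Nat.cast_sub (hn : 1 ≤ n)] at this
    exact this
  rw [_root_.div_mul_div_comm, le_div_iff₀ (by positivity)]
  calc (n.choose (k + 2) : K) * (n * (k + 2)!) = n * ((k + 2)! * n.choose (k + 2)) := by ring
    _ ≤ n * (n * (n - 1) * n ^ k) := by gcongr
    _ = (n - 1) * n ^ (k + 2) := by ring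

theorem Real.sum_Ico_pow_div_factorial_le {x : ℝ} (h0 : 0 ≤ x) (h1 : x ≤ 1) {n : ℕ}
    (hn : 0 < n) (N : ℕ) : ∑ m ∈ Ico n N, x ^ m / m ! ≤ x ^ n * (n + 1) / (n ! * n) := by
  rcases le_total n N with hnN | hNn
  · have hsplit := Finset.sum_range_add_sum_Ico (fun m => x ^ m / m !) hnN
    linarith [Real.sum_le_exp_of_nonneg h0 N, Real.exp_bound' h0 h1 hn]
  · rw [Finset.Ico_eq_empty_of_le hNn, Finset.sum_empty]
    positivity
section RDPTail

variable {α : ℕ} {τ ν : ℝ}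

noncomputable def rdpRatio (α : ℕ) (τ ν : ℝ) : ℝ := τ * α * Real.exp ((α - 1) / (2 * ν ^ 2))

theorem rdpRatio_nonneg (hτ : 0 ≤ τ) : 0 ≤ rdpRatio α τ ν := by
  unfold rdpRatio; positivity

theorem rdp_term_le {j : ℕ} (hτ : 0 ≤ τ) (hj : 2 ≤ j) (hjα : j ≤ α) :
    τ ^ j * (α.choose j : ℝ) * 2 * Real.exp ((j : ℝ) * ((j : ℝ) - 1) / (2 * ν ^ 2))
      ≤ 2 * ((α - 1) / α) * (rdpRatio α τ ν ^ j / j !) := by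
  have hexp : Real.exp ((j : ℝ) * ((j : ℝ) - 1) / (2 * ν ^ 2))
      ≤ Real.exp ((α - 1) / (2 * ν ^ 2)) ^ j := by
    rw [← Real.exp_nat_mul, ← mul_div_assoc]
    have : (j : ℝ) ≤ α := by exact_mod_cast hjα
    gcongr
  have hchoose := Nat.choose_le_sub_one_div_mul_pow_div_factorial (K := ℝ) (n := α) (by omega) hj
  calc τ ^ j * (α.choose j : ℝ) * 2 * Real.exp ((j : ℝ) * ((j : ℝ) - 1) / (2 * ν ^ 2))
      ≤ τ ^ j * ((α - 1) / α * (α ^ j / j !)) * 2 * Real.exp ((α - 1) / (2 * ν ^ 2)) ^ j := by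
        gcongr
        exact mul_nonneg (mul_nonneg (by positivity) ((Nat.cast_nonneg _).trans hchoose))
          zero_le_two
    _ = _ := by rw [rdpRatio, mul_pow, mul_pow]; ring

variable (hα : 0 < α) (hτ : 0 < τ) (hν : 0 < ν)
  (hcond : (α : ℝ) - 1 ≤ 2 / 3 * ν ^ 2 * Real.log (1 / (τ * α * (1 + ν ^ 2))))
include hα hτ hν hcond

theorem rdp_exp_pow_three_le :
    Real.exp ((α - 1) / (2 * ν ^ 2)) ^ 3 ≤ 1 / (τ * α * (1 + ν ^ 2)) := by
  have hx : 0 < τ * α * (1 + ν ^ 2) := by positivity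
  rw [← Real.exp_nat_mul, ← Real.exp_log (one_div_pos.2 hx)]
  gcongr
  rw [Nat.cast_ofNat, mul_div_assoc', div_le_iff₀ (by positivity)]
  linarith

theorem rdpRatio_pow_three_le : rdpRatio α τ ν ^ 3 ≤ τ ^ 2 * α ^ 2 / (1 + ν ^ 2) :=
  calc rdpRatio α τ ν ^ 3 = τ ^ 3 * α ^ 3 * Real.exp ((α - 1) / (2 * ν ^ 2)) ^ 3 := by
        rw [rdpRatio]; ring
    _ ≤ τ ^ 3 * α ^ 3 * (1 / (τ * α * (1 + ν ^ 2))) := by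
        gcongr; exact rdp_exp_pow_three_le hα hτ hν hcond
    _ = τ ^ 2 * α ^ 2 / (1 + ν ^ 2) := by field_simp

theorem rdpRatio_le_one : rdpRatio α τ ν ≤ 1 := by
  have hα1 : (1 : ℝ) ≤ α := by exact_mod_cast hα
  have hx1 : τ * α * (1 + ν ^ 2) ≤ 1 := by
    have : 1 ≤ Real.exp ((α - 1) / (2 * ν ^ 2)) ^ 3 :=
      one_le_pow₀ (Real.one_le_exp (div_nonneg (by linarith) (by positivity)))
    rw [← one_div_one_div (τ * α * (1 + ν ^ 2))]
    exact div_le_one_of_le₀ (this.trans (rdp_exp_pow_three_le hα hτ hν hcond))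
      (by positivity)
  have hτα0 : 0 ≤ τ * α := by positivity
  have hτα : τ * α ≤ 1 := le_trans (le_mul_of_one_le_right hτα0 (by nlinarith)) hx1
  have : rdpRatio α τ ν ^ 3 ≤ 1 :=
    (rdpRatio_pow_three_le hα hτ hν hcond).trans (div_le_one_of_le₀ (by nlinarith) (by positivity))
  exact (pow_le_one_iff_of_nonneg (rdpRatio_nonneg hτ.le) (by norm_num)).1 this

end RDPTail

theorem rdp_cubic_estimate_le_second_term {α : ℕ} (hα : 0 < α) {τ ν : ℝ} (hν : 0 < ν) :
    2 * ((α - 1) / α) * (τ ^ 2 * α ^ 2 / (1 + ν ^ 2) * (2 / 9))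
      ≤ τ ^ 2 * (α.choose 2 : ℝ) * (1 / ν ^ 2) := by
  have hα1 : (1 : ℝ) ≤ α := by exact_mod_cast hα
  have key : (4 : ℝ) / (9 * (1 + ν ^ 2)) ≤ 1 / (2 * ν ^ 2) := by
    rw [div_le_div_iff₀ (by positivity) (by positivity)]
    nlinarith
  calc 2 * ((α - 1) / α) * (τ ^ 2 * α ^ 2 / (1 + ν ^ 2) * (2 / 9))
      = τ ^ 2 * α * (α - 1) * (4 / (9 * (1 + ν ^ 2))) := by
        field_simp
        ring
    _ ≤ τ ^ 2 * α * (α - 1) * (1 / (2 * ν ^ 2)) := by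
        gcongr
    _ = τ ^ 2 * (α.choose 2 : ℝ) * (1 / ν ^ 2) := by
        rw [Nat.cast_choose_two]
        ring

open Finset in
theorem rdp_tail_sum_bound_general (α : ℕ) (hα : 2 ≤ α) (τ ν : ℝ)
    (hτ0 : 0 < τ) (hν0 : 0 < ν)
    (hcond : (α : ℝ) - 1 ≤ 2 / 3 * ν ^ 2 * Real.log (1 / (τ * α * (1 + ν ^ 2)))) :
    ∑ j ∈ Icc 3 α, τ ^ j * (α.choose j : ℝ) * 2 *
        Real.exp ((j : ℝ) * ((j : ℝ) - 1) / (2 * ν ^ 2))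
      ≤ τ ^ 2 * (α.choose 2 : ℝ) * (1 / ν ^ 2) := by
  have hα0 : 0 < α := by omega
  have hα1 : (0 : ℝ) ≤ (α - 1) / α :=
    div_nonneg (sub_nonneg.2 (Nat.one_le_cast.2 hα0)) (by positivity)
  set r := rdpRatio α τ ν
  calc ∑ j ∈ Icc 3 α, τ ^ j * (α.choose j : ℝ) * 2 *
        Real.exp ((j : ℝ) * ((j : ℝ) - 1) / (2 * ν ^ 2))
      ≤ ∑ j ∈ Icc 3 α, 2 * ((α - 1) / α) * (r ^ j / j !) :=
        sum_le_sum fun j hj => rdp_term_le hτ0.le (by grind) (mem_Icc.1 hj).2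
    _ = 2 * ((α - 1) / α) * ∑ j ∈ Ico 3 (α + 1), r ^ j / j ! := by
        rw [← mul_sum, Finset.Ico_add_one_right_eq_Icc]
    _ ≤ 2 * ((α - 1) / α) * (r ^ 3 * (2 / 9)) := by
        gcongr
        refine (Real.sum_Ico_pow_div_factorial_le (rdpRatio_nonneg hτ0.le)
          (rdpRatio_le_one hα0 hτ0 hν0 hcond) three_pos _).trans_eq ?_
        norm_num [Nat.factorial]
        ring
    _ ≤ 2 * ((α - 1) / α) * (τ ^ 2 * α ^ 2 / (1 + ν ^ 2) * (2 / 9)) := by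
        gcongr
        exact rdpRatio_pow_three_le hα0 hτ0 hν0 hcond
    _ ≤ τ ^ 2 * (α.choose 2 : ℝ) * (1 / ν ^ 2) := rdp_cubic_estimate_le_second_term hα0 hν0

open Finset in
/-- Tail bound in the uniform-subsampling RDP analysis:
`Σ_{j=3}^{α} τ^j·C(α,j)·2·e^{j(j−1)/(2ν²)} ≤ τ²·C(α,2)·(1/ν²)`. -/
theorem rdp_tail_sum_bound (α : ℕ) (hα : 2 ≤ α) (τ ν : ℝ)
    (hτ0 : 0 < τ) (hτ1 : τ ≤ 1) (hν0 : 0 < ν)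
    (hcond : (α : ℝ) - 1 ≤ 2 / 3 * ν ^ 2 * Real.log (1 / (τ * α * (1 + ν ^ 2)))) :
    ∑ j ∈ Icc 3 α, τ ^ j * (α.choose j : ℝ) * 2 *
        Real.exp ((j : ℝ) * ((j : ℝ) - 1) / (2 * ν ^ 2))
      ≤ τ ^ 2 * (α.choose 2 : ℝ) * (1 / ν ^ 2) :=
  rdp_tail_sum_bound_general α hα τ ν hτ0 hν0 hcond
end

section
/- Let E be a real inner product space (e.g. ℝ^d) and let h : E → ℝ be differentiable, μ-strongly convex and β-smooth, where 0 < μ ≤ β. Then for all x, y, z ∈ E: ⟨∇h(x), z − y⟩ ≥ h(z) − h(y) + (μ/4)‖y − z‖² − β‖z − x‖². -/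
open scoped RealInnerProductSpace

/-- Perturbed strong convexity: if `h` is differentiable with gradient `g`
(i.e. the derivative of `h` at `x` is `y ↦ ⟪g x, y⟫`), `μ`-strongly convex and
`β`-smooth (`0 < μ ≤ β`), then for all `x y z`,
`⟨∇h(x), z − y⟩ ≥ h(z) − h(y) + (μ/4)‖y − z‖² − β‖z − x‖²`. -/
theorem perturbed_strong_convexity {E : Type*} [NormedAddCommGroup E]
    [InnerProductSpace ℝ E] (h : E → ℝ) (g : E → E) (μ β : ℝ)
    (hμ : 0 < μ) (hμβ : μ ≤ β)
    (hgrad : ∀ x, HasFDerivAt h (innerSL ℝ (g x)) x)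
    (hstrong : ∀ u v, h u ≥ h v + ⟪g v, u - v⟫ + μ / 2 * ‖u - v‖ ^ 2)
    (hsmooth : ∀ u v, h u ≤ h v + ⟪g v, u - v⟫ + β / 2 * ‖u - v‖ ^ 2) :
    ∀ x y z, ⟪g x, z - y⟫ ≥ h z - h y + μ / 4 * ‖y - z‖ ^ 2 - β * ‖z - x‖ ^ 2 := by
  intro x y z
  have h1 := hstrong y x
  have h2 := hsmooth z x
  have h4 : ⟪g x, z - y⟫ = ⟪g x, z - x⟫ - ⟪g x, y - x⟫ := by
    rw [← inner_sub_right]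
    congr 1
    abel
  have h3 : ‖y - z‖ ≤ ‖y - x‖ + ‖z - x‖ := by
    have : y - z = (y - x) - (z - x) := by abel
    rw [this]
    exact norm_sub_le _ _
  have h5 : ‖y - z‖ ^ 2 ≤ (‖y - x‖ + ‖z - x‖) ^ 2 :=
    pow_le_pow_left₀ (norm_nonneg _) h3 2
  nlinarith [sq_nonneg (‖y - x‖ - ‖z - x‖), sq_nonneg ‖z - x‖]
end

section
/- Let a, b, c, η_max be positive real numbers and set η = min{ √(a/b), (a/c)^{1/3}, η_max }. Then a/η + b·η + c·η² ≤ a/η_max + 2√(a·b) + 2·(a²·c)^{1/3}. -/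
/-!
At `√(a/b)` the terms `a/η` and `b·η` balance, both being `√(a·b)`; at `(a/c)^{1/3}` the terms
`a/η` and `c·η²` balance, both being `(a²·c)^{1/3}`. The minimum `η` lies below both balance
points, so `b·η` and `c·η²` are bounded by their values there, while `a/η` is the largest of
`a/√(a/b)`, `a/(a/c)^{1/3}` and `a/η_max`, hence at most their sum.
-/

open Real

lemma div_min_le_div_add_div {a x y : ℝ} (ha : 0 ≤ a) (hx : 0 < x) (hy : 0 < y) :
    a / min x y ≤ a / x + a / y := by
  rcases min_choice x y with h | h <;> rw [h]
  · linarith [div_nonneg ha hy.le]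
  · linarith [div_nonneg ha hx.le]

section Balance

variable {a b : ℝ}

lemma mul_sqrt_div_eq_sqrt_mul (ha : 0 ≤ a) (hb : 0 < b) : b * √(a / b) = √(a * b) := by
  rw [← pow_left_inj₀ (by positivity) (by positivity) two_ne_zero, mul_pow,
    sq_sqrt (by positivity), sq_sqrt (by positivity)]
  field_simp

lemma div_sqrt_div_eq_sqrt_mul (ha : 0 < a) (hb : 0 < b) : a / √(a / b) = √(a * b) := by
  rw [← pow_left_inj₀ (by positivity) (by positivity) two_ne_zero, div_pow,
    sq_sqrt (by positivity), sq_sqrt (by positivity)]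
  field_simp

lemma rpow_one_third_pow_three {x : ℝ} (hx : 0 ≤ x) : (x ^ ((1 : ℝ) / 3)) ^ 3 = x := by
  simpa [one_div] using rpow_inv_natCast_pow hx (n := 3) three_ne_zero

lemma mul_rpow_one_third_div_sq (ha : 0 ≤ a) (hb : 0 < b) :
    b * ((a / b) ^ ((1 : ℝ) / 3)) ^ 2 = (a ^ 2 * b) ^ ((1 : ℝ) / 3) := by
  rw [← pow_left_inj₀ (by positivity) (by positivity) three_ne_zero, mul_pow, ← pow_mul,
    mul_comm 2 3, pow_mul, rpow_one_third_pow_three (by positivity),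
    rpow_one_third_pow_three (by positivity)]
  field_simp

lemma div_rpow_one_third_div (ha : 0 < a) (hb : 0 < b) :
    a / (a / b) ^ ((1 : ℝ) / 3) = (a ^ 2 * b) ^ ((1 : ℝ) / 3) := by
  rw [← pow_left_inj₀ (by positivity) (by positivity) three_ne_zero, div_pow,
    rpow_one_third_pow_three (by positivity), rpow_one_third_pow_three (by positivity)]
  field_simp

end Balance

/-- Step-size tuning inequality: with
`η = min { √(a/b), (a/c)^{1/3}, η_max }`, one has
`a/η + b·η + c·η² ≤ a/η_max + 2√(a·b) + 2(a²·c)^{1/3}`. -/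
theorem stepsize_tuning (a b c ηmax η : ℝ)
    (ha : 0 < a) (hb : 0 < b) (hc : 0 < c) (hmax : 0 < ηmax)
    (hη : η = min (min (Real.sqrt (a / b)) ((a / c) ^ ((1 : ℝ) / 3))) ηmax) :
    a / η + b * η + c * η ^ 2
      ≤ a / ηmax + 2 * Real.sqrt (a * b) + 2 * (a ^ 2 * c) ^ ((1 : ℝ) / 3) := by
  set s := √(a / b)
  set t := (a / c) ^ ((1 : ℝ) / 3)
  have hs : 0 < s := sqrt_pos.2 (div_pos ha hb)
  have ht : 0 < t := rpow_pos_of_pos (div_pos ha hc) _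
  have hη0 : 0 < η := hη ▸ lt_min (lt_min hs ht) hmax
  have hηs : η ≤ s := hη ▸ min_le_of_left_le (min_le_left s t)
  have hηt : η ≤ t := hη ▸ min_le_of_left_le (min_le_right s t)
  have hηmin : a / η ≤ a / s + a / t + a / ηmax := hη ▸ calc
    a / min (min s t) ηmax ≤ a / min s t + a / ηmax :=
      div_min_le_div_add_div ha.le (lt_min hs ht) hmax
    _ ≤ a / s + a / t + a / ηmax := by gcongr; exact div_min_le_div_add_div ha.le hs ht
  calc a / η + b * η + c * η ^ 2 ≤ (a / s + a / t + a / ηmax) + b * s + c * t ^ 2 := by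
        gcongr
    _ = a / ηmax + 2 * √(a * b) + 2 * (a ^ 2 * c) ^ ((1 : ℝ) / 3) := by
        rw [div_sqrt_div_eq_sqrt_mul ha hb, mul_sqrt_div_eq_sqrt_mul ha.le hb,
          div_rpow_one_third_div ha hc, mul_rpow_one_third_div_sq ha.le hc]
        ring
end
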